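/- If the variable y does not occur in the first-order formula θ, then θ ↪ (∃y ψ) is logically equivalent to ∃y (θ ↪ ψ) in Team Semantics. -/

import Mathlib

/-- A relational first-order signature. -/
structure Signature where
  RelSym : Type
  arity : RelSym → ℕ

/-- First-order formulas in negation normal form over signature `σ` and variables `V`. -/
inductive Formula (σ : Signature) (V : Type) : Type
  | rel (r : σ.RelSym) (ts : Fin (σ.arity r) → V)
  | nrel (r : σ.RelSym) (ts : Fin (σ.arity r) → V)
  | eq (v w : V)
  | neq (v w : V)
  | and (φ ψ : Formula σ V)
  | or (φ ψ : Formula σ V)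
  | ex (v : V) (φ : Formula σ V)
  | all (v : V) (φ : Formula σ V)

/-- A first-order structure with domain `M`. -/
structure Struc (σ : Signature) (M : Type) where
  interp : ∀ r : σ.RelSym, (Fin (σ.arity r) → M) → Prop

/-- Free variables of a formula. -/
def Formula.freeVars {σ : Signature} {V : Type} : Formula σ V → Set V
  | .rel _ ts => Set.range ts
  | .nrel _ ts => Set.range ts
  | .eq v w => {v, w}
  | .neq v w => {v, w}
  | .and φ ψ => φ.freeVars ∪ ψ.freeVars
  | .or φ ψ => φ.freeVars ∪ ψ.freeVars
  | .ex v φ => φ.freeVars \ {v}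
  | .all v φ => φ.freeVars \ {v}

/-- All variables (free or bound) occurring in a formula. -/
def Formula.vars {σ : Signature} {V : Type} : Formula σ V → Set V
  | .rel _ ts => Set.range ts
  | .nrel _ ts => Set.range ts
  | .eq v w => {v, w}
  | .neq v w => {v, w}
  | .and φ ψ => φ.vars ∪ ψ.vars
  | .or φ ψ => φ.vars ∪ ψ.vars
  | .ex v φ => insert v φ.vars
  | .all v φ => insert v φ.vars

/-- Tarskian satisfaction of a formula by a single assignment. -/
def Tarski {σ : Signature} {V M : Type} [DecidableEq V] (𝕄 : Struc σ M) :
    Formula σ V → (V → M) → Prop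
  | .rel r ts, s => 𝕄.interp r (fun i => s (ts i))
  | .nrel r ts, s => ¬ 𝕄.interp r (fun i => s (ts i))
  | .eq v w, s => s v = s w
  | .neq v w, s => s v ≠ s w
  | .and φ ψ, s => Tarski 𝕄 φ s ∧ Tarski 𝕄 ψ s
  | .or φ ψ, s => Tarski 𝕄 φ s ∨ Tarski 𝕄 ψ s
  | .ex v φ, s => ∃ m : M, Tarski 𝕄 φ (Function.update s v m)
  | .all v φ, s => ∀ m : M, Tarski 𝕄 φ (Function.update s v m)

/-- Supplementation `X[H/v]` of a team. -/
def supplement {V M : Type} [DecidableEq V] (X : Set (V → M))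
    (H : (V → M) → Set M) (v : V) : Set (V → M) :=
  {t | ∃ s ∈ X, ∃ m ∈ H s, t = Function.update s v m}

/-- Duplication `X[M/v]` of a team. -/
def duplicate {V M : Type} [DecidableEq V] (X : Set (V → M)) (v : V) : Set (V → M) :=
  {t | ∃ s ∈ X, ∃ m : M, t = Function.update s v m}

/-- Team Semantics satisfaction. -/
def TeamSat {σ : Signature} {V M : Type} [DecidableEq V] (𝕄 : Struc σ M) :
    Formula σ V → Set (V → M) → Prop
  | .rel r ts, X => ∀ s ∈ X, 𝕄.interp r (fun i => s (ts i))
  | .nrel r ts, X => ∀ s ∈ X, ¬ 𝕄.interp r (fun i => s (ts i))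
  | .eq v w, X => ∀ s ∈ X, s v = s w
  | .neq v w, X => ∀ s ∈ X, s v ≠ s w
  | .and φ ψ, X => TeamSat 𝕄 φ X ∧ TeamSat 𝕄 ψ X
  | .or φ ψ, X => ∃ Y Z, X = Y ∪ Z ∧ TeamSat 𝕄 φ Y ∧ TeamSat 𝕄 ψ Z
  | .ex v φ, X => ∃ H : (V → M) → Set M,
      (∀ s ∈ X, (H s).Nonempty) ∧ TeamSat 𝕄 φ (supplement X H v)
  | .all v φ, X => TeamSat 𝕄 φ (duplicate X v)

/-- A (generalized) dependency: an arity together with, for each domain,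
a property of relations of that arity (the class of relations satisfying it). -/
structure Dep where
  ar : ℕ
  sem : (M : Type) → Set (Fin ar → M) → Prop

/-- Formulas of `FO(𝒟)`: first-order formulas in NNF possibly containing
dependency atoms `D t̄`. -/
inductive TForm (σ : Signature) (V : Type) : Type 1
  | rel (r : σ.RelSym) (ts : Fin (σ.arity r) → V)
  | nrel (r : σ.RelSym) (ts : Fin (σ.arity r) → V)
  | eq (v w : V)
  | neq (v w : V)
  | and (φ ψ : TForm σ V)
  | or (φ ψ : TForm σ V)
  | ex (v : V) (φ : TForm σ V)
  | all (v : V) (φ : TForm σ V)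
  | dep (d : Dep) (ts : Fin d.ar → V)

/-- All variables occurring in a `TForm`. -/
def TForm.vars {σ : Signature} {V : Type} : TForm σ V → Set V
  | .rel _ ts => Set.range ts
  | .nrel _ ts => Set.range ts
  | .eq v w => {v, w}
  | .neq v w => {v, w}
  | .and φ ψ => φ.vars ∪ ψ.vars
  | .or φ ψ => φ.vars ∪ ψ.vars
  | .ex v φ => insert v φ.vars
  | .all v φ => insert v φ.vars
  | .dep _ ts => Set.range ts

/-- Team Semantics for formulas with dependency atoms.  The dependency atom
`D t̄` holds in `X` iff the relation `X(t̄)` satisfies `D`. -/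
def TTeamSat {σ : Signature} {V M : Type} [DecidableEq V] (𝕄 : Struc σ M) :
    TForm σ V → Set (V → M) → Prop
  | .rel r ts, X => ∀ s ∈ X, 𝕄.interp r (fun i => s (ts i))
  | .nrel r ts, X => ∀ s ∈ X, ¬ 𝕄.interp r (fun i => s (ts i))
  | .eq v w, X => ∀ s ∈ X, s v = s w
  | .neq v w, X => ∀ s ∈ X, s v ≠ s w
  | .and φ ψ, X => TTeamSat 𝕄 φ X ∧ TTeamSat 𝕄 ψ X
  | .or φ ψ, X => ∃ Y Z, X = Y ∪ Z ∧ TTeamSat 𝕄 φ Y ∧ TTeamSat 𝕄 ψ Z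
  | .ex v φ, X => ∃ H : (V → M) → Set M,
      (∀ s ∈ X, (H s).Nonempty) ∧ TTeamSat 𝕄 φ (supplement X H v)
  | .all v φ, X => TTeamSat 𝕄 φ (duplicate X v)
  | .dep d ts, X => d.sem M ((fun s => fun i => s (ts i)) '' X)

/-- The NNF negation of a first-order formula. -/
def Formula.neg {σ : Signature} {V : Type} : Formula σ V → Formula σ V
  | .rel r ts => .nrel r ts
  | .nrel r ts => .rel r ts
  | .eq v w => .neq v w
  | .neq v w => .eq v w
  | .and φ ψ => .or φ.neg ψ.neg
  | .or φ ψ => .and φ.neg ψ.neg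
  | .ex v φ => .all v φ.neg
  | .all v φ => .ex v φ.neg

/-- Embedding of first-order formulas into formulas with dependency atoms. -/
def Formula.toT {σ : Signature} {V : Type} : Formula σ V → TForm σ V
  | .rel r ts => .rel r ts
  | .nrel r ts => .nrel r ts
  | .eq v w => .eq v w
  | .neq v w => .neq v w
  | .and φ ψ => .and φ.toT ψ.toT
  | .or φ ψ => .or φ.toT ψ.toT
  | .ex v φ => .ex v φ.toT
  | .all v φ => .all v φ.toT

/-- The connective `θ ↪ φ`, defined as `(¬θ) ∨ (θ ∧ φ)`. -/
def hook {σ : Signature} {V : Type} (θ : Formula σ V) (φ : TForm σ V) : TForm σ V :=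
  .or θ.neg.toT (.and θ.toT φ)

/-- The restriction `X ↾ θ` of a team to the assignments Tarski-satisfying `θ`. -/
def restrTeam {σ : Signature} {V M : Type} [DecidableEq V] (𝕄 : Struc σ M)
    (X : Set (V → M)) (θ : Formula σ V) : Set (V → M) :=
  {s ∈ X | Tarski 𝕄 θ s}

/-!
By flatness of first-order formulas, `θ ↪ φ` holds in `X` exactly when `φ` holds in `X ↾ θ`.
As `y` does not occur in `θ`, changing the value of `y` does not affect `θ`, so restricting
to `θ` commutes with supplementing `y`. A supplementing function only matters on the team it
supplements, so one for `X ↾ θ` extends to a supplementing function for all of `X`.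
-/

theorem Formula.freeVars_subset_vars {σ : Signature} {V : Type} (θ : Formula σ V) :
    θ.freeVars ⊆ θ.vars := by
  induction θ with
  | rel | nrel | eq | neq => exact subset_rfl
  | and φ ψ ihφ ihψ | or φ ψ ihφ ihψ => exact Set.union_subset_union ihφ ihψ
  | ex v φ ih | all v φ ih =>
      exact fun x hx => Set.mem_insert_of_mem v (ih hx.1)

section

variable {σ : Signature} {V M : Type} [DecidableEq V] (𝕄 : Struc σ M)

theorem Formula.tarski_neg (θ : Formula σ V) (s : V → M) :
    Tarski 𝕄 θ.neg s ↔ ¬ Tarski 𝕄 θ s := by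
  induction θ generalizing s with
  | rel | nrel | eq | neq => simp [Formula.neg, Tarski]
  | and φ ψ ihφ ihψ => simp only [Formula.neg, Tarski, ihφ, ihψ, not_and_or]
  | or φ ψ ihφ ihψ => simp only [Formula.neg, Tarski, ihφ, ihψ, not_or]
  | ex v φ ih => simp only [Formula.neg, Tarski, ih, not_exists]
  | all v φ ih => simp only [Formula.neg, Tarski, ih, not_forall]

theorem Formula.tarski_congr (θ : Formula σ V) {s t : V → M}
    (hst : ∀ x ∈ θ.freeVars, s x = t x) : Tarski 𝕄 θ s ↔ Tarski 𝕄 θ t := by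
  induction θ generalizing s t with
  | rel r ts | nrel r ts =>
      have : (fun i => s (ts i)) = fun i => t (ts i) :=
        funext fun i => hst _ (Set.mem_range_self i)
      simp only [Tarski, this]
  | eq v w | neq v w =>
      simp only [Tarski, hst v (by simp [Formula.freeVars]), hst w (by simp [Formula.freeVars])]
  | and φ ψ ihφ ihψ | or φ ψ ihφ ihψ =>
      simp only [Tarski, ihφ fun x hx => hst x (Or.inl hx), ihψ fun x hx => hst x (Or.inr hx)]
  | ex v φ ih | all v φ ih =>
      have hupd (m : M) :
          ∀ x ∈ φ.freeVars, Function.update s v m x = Function.update t v m x := by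
        intro x hx
        by_cases hxv : x = v
        · simp [hxv]
        · simp only [Function.update_of_ne hxv]
          exact hst x ⟨hx, hxv⟩
      simp only [Tarski, ih (hupd _)]

theorem Formula.tarski_update_of_notMem_freeVars {θ : Formula σ V} {y : V}
    (hy : y ∉ θ.freeVars) (s : V → M) (m : M) :
    Tarski 𝕄 θ (Function.update s y m) ↔ Tarski 𝕄 θ s :=
  θ.tarski_congr 𝕄 fun _ hx => Function.update_of_ne (ne_of_mem_of_not_mem hx hy) m s

theorem Formula.tTeamSat_toT_iff (φ : Formula σ V) (X : Set (V → M)) :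
    TTeamSat 𝕄 φ.toT X ↔ ∀ s ∈ X, Tarski 𝕄 φ s := by
  induction φ generalizing X with
  | rel | nrel | eq | neq => rfl
  | and φ ψ ihφ ihψ =>
      simp only [Formula.toT, TTeamSat, ihφ, ihψ, Tarski]
      exact ⟨fun h s hs => ⟨h.1 s hs, h.2 s hs⟩,
        fun h => ⟨fun s hs => (h s hs).1, fun s hs => (h s hs).2⟩⟩
  | or φ ψ ihφ ihψ =>
      simp only [Formula.toT, TTeamSat, ihφ, ihψ, Tarski]
      constructor
      · rintro ⟨Y, Z, rfl, hY, hZ⟩ s (hs | hs)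
        exacts [Or.inl (hY s hs), Or.inr (hZ s hs)]
      · intro h
        refine ⟨{s ∈ X | Tarski 𝕄 φ s}, {s ∈ X | Tarski 𝕄 ψ s}, ?_,
          fun s hs => hs.2, fun s hs => hs.2⟩
        ext s
        constructor
        · intro hs
          exact (h s hs).imp (⟨hs, ·⟩) (⟨hs, ·⟩)
        · rintro (⟨hs, -⟩ | ⟨hs, -⟩) <;> exact hs
  | ex v φ ih =>
      simp only [Formula.toT, TTeamSat, ih, Tarski]
      constructor
      · rintro ⟨H, hne, hsat⟩ s hs
        obtain ⟨m, hm⟩ := hne s hs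
        exact ⟨m, hsat _ ⟨s, hs, m, hm, rfl⟩⟩
      · intro h
        refine ⟨fun s => {m | Tarski 𝕄 φ (Function.update s v m)}, h, ?_⟩
        rintro t ⟨s, -, m, hm, rfl⟩
        exact hm
  | all v φ ih =>
      simp only [Formula.toT, TTeamSat, ih, Tarski]
      exact ⟨fun h s hs m => h _ ⟨s, hs, m, rfl⟩,
        fun h t ⟨s, hs, m, ht⟩ => ht ▸ h s hs m⟩

theorem tTeamSat_hook_iff (θ : Formula σ V) (φ : TForm σ V) (X : Set (V → M)) :
    TTeamSat 𝕄 (hook θ φ) X ↔ TTeamSat 𝕄 φ (restrTeam 𝕄 X θ) := by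
  simp only [hook, TTeamSat, Formula.tTeamSat_toT_iff, Formula.tarski_neg]
  constructor
  · rintro ⟨Y, Z, rfl, hY, hZ, hφ⟩
    convert hφ using 1
    ext s
    exact ⟨fun ⟨hs, hθ⟩ => hs.resolve_left fun hsY => hY s hsY hθ,
      fun hs => ⟨Or.inr hs, hZ s hs⟩⟩
  · intro hφ
    refine ⟨{s ∈ X | ¬ Tarski 𝕄 θ s}, restrTeam 𝕄 X θ, ?_,
      fun s hs => hs.2, fun s hs => hs.2, hφ⟩
    ext s
    constructor
    · intro hs
      exact (em' (Tarski 𝕄 θ s)).imp (⟨hs, ·⟩) (⟨hs, ·⟩)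
    · rintro (⟨hs, -⟩ | ⟨hs, -⟩) <;> exact hs

theorem restrTeam_supplement {θ : Formula σ V} {y : V} (hy : y ∉ θ.freeVars)
    (X : Set (V → M)) (H : (V → M) → Set M) :
    restrTeam 𝕄 (supplement X H y) θ = supplement (restrTeam 𝕄 X θ) H y := by
  ext t
  constructor
  · rintro ⟨⟨s, hs, m, hm, rfl⟩, hθ⟩
    exact ⟨s, ⟨hs, (θ.tarski_update_of_notMem_freeVars 𝕄 hy s m).mp hθ⟩, m, hm, rfl⟩
  · rintro ⟨s, ⟨hs, hθ⟩, m, hm, rfl⟩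
    exact ⟨⟨s, hs, m, hm, rfl⟩, (θ.tarski_update_of_notMem_freeVars 𝕄 hy s m).mpr hθ⟩

end

theorem supplement_congr {V M : Type} [DecidableEq V] {X : Set (V → M)}
    {H H' : (V → M) → Set M} (hH : ∀ s ∈ X, H s = H' s) (v : V) :
    supplement X H v = supplement X H' v := by
  ext t
  constructor
  · rintro ⟨s, hs, m, hm, rfl⟩
    exact ⟨s, hs, m, hH s hs ▸ hm, rfl⟩
  · rintro ⟨s, hs, m, hm, rfl⟩
    exact ⟨s, hs, m, (hH s hs).symm ▸ hm, rfl⟩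

/-- if `y` does not occur in `θ` then `θ ↪ (∃y ψ) ≡ ∃y (θ ↪ ψ)`. -/
theorem hook_ex {σ : Signature} {V M : Type} [DecidableEq V]
    (𝕄 : Struc σ M) (θ : Formula σ V) (ψ : TForm σ V) (y : V)
    (hy : y ∉ θ.vars) (X : Set (V → M)) :
    TTeamSat 𝕄 (hook θ (.ex y ψ)) X ↔ TTeamSat 𝕄 (.ex y (hook θ ψ)) X := by
  have hy' : y ∉ θ.freeVars := fun h => hy (θ.freeVars_subset_vars h)
  simp only [tTeamSat_hook_iff, TTeamSat, restrTeam_supplement 𝕄 hy']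
  constructor
  · rintro ⟨H, hne, hψ⟩
    refine ⟨fun s => {m | Tarski 𝕄 θ s → m ∈ H s}, fun s hs => ?_, ?_⟩
    · by_cases hθ : Tarski 𝕄 θ s
      · exact (hne s ⟨hs, hθ⟩).mono fun m hm _ => hm
      · exact ⟨s y, fun h => absurd h hθ⟩
    · have hH : ∀ s ∈ restrTeam 𝕄 X θ, {m | Tarski 𝕄 θ s → m ∈ H s} = H s :=
        fun s hs => Set.ext fun _ => imp_iff_right hs.2
      rwa [supplement_congr hH]
  · rintro ⟨H, hne, hψ⟩
    exact ⟨H, fun s hs => hne s hs.1, hψ⟩
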